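/- Every irreducible sequent that is provable in G3iM^w has a sensible strict proof in G3iM^w. -/

import Mathlib

/-- Formulas of intuitionistic (monotone) modal logic over atoms `ℕ`,
with conjunction, disjunction, implication, falsum and a box modality. -/
inductive Fm : Type where
  | atom : ℕ → Fm
  | bot  : Fm
  | and  : Fm → Fm → Fm
  | or   : Fm → Fm → Fm
  | imp  : Fm → Fm → Fm
  | box  : Fm → Fm
deriving DecidableEq

/-- `⊤` as the abbreviation `⊥ → ⊥`. -/
def Fm.top : Fm := Fm.imp Fm.bot Fm.bot

/-- Derivations in the sequent calculus `G3iM^w`. -/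
inductive D : Multiset Fm → Fm → Type where
  | ax (Γ : Multiset Fm) (p : ℕ) : D (Fm.atom p ::ₘ Γ) (Fm.atom p)
  | lbot (Γ : Multiset Fm) (φ : Fm) : D (Fm.bot ::ₘ Γ) φ
  | land (Γ : Multiset Fm) (φ ψ θ : Fm) :
      D (φ ::ₘ ψ ::ₘ Γ) θ → D (φ.and ψ ::ₘ Γ) θ
  | rand (Γ : Multiset Fm) (φ ψ : Fm) : D Γ φ → D Γ ψ → D Γ (φ.and ψ)
  | lor (Γ : Multiset Fm) (φ ψ θ : Fm) :
      D (φ ::ₘ Γ) θ → D (ψ ::ₘ Γ) θ → D (φ.or ψ ::ₘ Γ) θ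
  | ror₁ (Γ : Multiset Fm) (φ ψ : Fm) : D Γ φ → D Γ (φ.or ψ)
  | ror₂ (Γ : Multiset Fm) (φ ψ : Fm) : D Γ ψ → D Γ (φ.or ψ)
  | limp (Γ : Multiset Fm) (φ ψ θ : Fm) :
      D (φ.imp ψ ::ₘ Γ) φ → D (ψ ::ₘ Γ) θ → D (φ.imp ψ ::ₘ Γ) θ
  | rimp (Γ : Multiset Fm) (φ ψ : Fm) : D (φ ::ₘ Γ) ψ → D Γ (φ.imp ψ)
  | m (Γ : Multiset Fm) (φ ψ : Fm) : D {φ} ψ → D (φ.box ::ₘ Γ) (ψ.box)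

/-- A derivation is sensible if its last inference is not `L→` with a
principal left formula `p → ψ` for an atom `p`. -/
def Sensible {Γ : Multiset Fm} {δ : Fm} (d : D Γ δ) : Prop :=
  match d with
  | .limp _ φ _ _ _ _ => ∀ p, φ ≠ Fm.atom p
  | _ => True

/-- The last inference of the derivation is an axiom or the modal rule `M`. -/
def EndsAxM {Γ : Multiset Fm} {δ : Fm} (d : D Γ δ) : Prop :=
  match d with
  | .ax _ _ => True
  | .lbot _ _ => True
  | .m _ _ _ _ => True
  | _ => False

/-- A derivation is strict if, whenever its last inference is `L→` with a
principal formula `□χ → ψ`, the left premise is an axiom or the conclusion of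
the modal rule `M`. -/
def Strict {Γ : Multiset Fm} {δ : Fm} (d : D Γ δ) : Prop :=
  match d with
  | .limp _ φ _ _ dl _ => (∃ χ, φ = Fm.box χ) → EndsAxM dl
  | _ => True

/-- A multiset is irreducible if it contains no conjunction, disjunction or
`⊥`, and for no atom `p` contains both `p` and `p → ψ`. -/
def Irred (Γ : Multiset Fm) : Prop :=
  (∀ φ ψ : Fm, φ.and ψ ∉ Γ) ∧ (∀ φ ψ : Fm, φ.or ψ ∉ Γ) ∧ Fm.bot ∉ Γ ∧
  (∀ (p : ℕ) (ψ : Fm), ¬ (Fm.atom p ∈ Γ ∧ (Fm.atom p).imp ψ ∈ Γ))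

/-!
Let a derivation end in `L→` with principal formula `θ → ψ` and left premise `d₁`; induct on `d₁`.
In an irreducible context `d₁` cannot end in an axiom for an atom `p` (then `p` and `p → ψ` would
both be in the context), nor in `L⊥`, `L∧` or `L∨`. If it ends in a right rule, `θ` is neither an
atom nor a box; if it ends in `M`, strictness holds. If it ends in `L→` with another principal
formula `α → β`, permute the two `L→` inferences: invertibility of `L→` in its right premise turns
the right premise `ψ, α → β, Δ ⊢ δ` into `ψ, β, Δ ⊢ δ`, and the new derivation ends in `L→` on
`α → β` with the left premise of `d₁` as its own, in the same context, so induction applies.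
-/

theorem Multiset.exists_cons_of_cons_eq_cons {α : Type*} {a b : α} {s t : Multiset α}
    (h : a ::ₘ s = b ::ₘ t) (hne : a ≠ b) : ∃ u, s = b ::ₘ u ∧ t = a ::ₘ u :=
  ((Multiset.cons_eq_cons.mp h).resolve_left fun h' => hne h'.1).2

namespace D

open Multiset

def cast {Γ Γ' : Multiset Fm} {δ : Fm} (h : Γ = Γ') (d : D Γ δ) : D Γ' δ := h ▸ d

theorem endsAxM_cast {Γ Γ' : Multiset Fm} {δ : Fm} (h : Γ = Γ') (d : D Γ δ) :
    EndsAxM (d.cast h) ↔ EndsAxM d := by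
  subst h; rfl

theorem sensible_strict_limp {Γ : Multiset Fm} {φ ψ δ : Fm} (d₁ : D (φ.imp ψ ::ₘ Γ) φ)
    (d₂ : D (ψ ::ₘ Γ) δ) (hatom : ∀ p, φ ≠ .atom p) (hbox : ∀ χ, φ = .box χ → EndsAxM d₁) :
    Sensible (limp Γ φ ψ δ d₁ d₂) ∧ Strict (limp Γ φ ψ δ d₁ d₂) :=
  ⟨hatom, fun ⟨χ, h⟩ => hbox χ h⟩

theorem sensible_strict_or_limp {Γ : Multiset Fm} {δ : Fm} (d : D Γ δ) :
    Sensible d ∧ Strict d ∨ ∃ Γ' φ ψ, Γ = φ.imp ψ ::ₘ Γ' ∧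
      Nonempty (D (φ.imp ψ ::ₘ Γ') φ) ∧ Nonempty (D (ψ ::ₘ Γ') δ) := by
  cases d
  case limp d₁ d₂ => exact .inr ⟨_, _, _, rfl, ⟨d₁⟩, ⟨d₂⟩⟩
  all_goals exact .inl ⟨trivial, trivial⟩

theorem inversion_imp_left {α β : Fm} {Γ : Multiset Fm} {δ : Fm} (d : D Γ δ) :
    ∀ {Γ₀ : Multiset Fm}, Γ = α.imp β ::ₘ Γ₀ → Nonempty (D (β ::ₘ Γ₀) δ) := by
  induction d with
  | ax Γ p =>
    intro Γ₀ h
    obtain ⟨u, -, rfl⟩ := exists_cons_of_cons_eq_cons h nofun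
    exact ⟨(D.ax _ p).cast (cons_swap _ _ _)⟩
  | lbot Γ φ =>
    intro Γ₀ h
    obtain ⟨u, -, rfl⟩ := exists_cons_of_cons_eq_cons h nofun
    exact ⟨(D.lbot _ φ).cast (cons_swap _ _ _)⟩
  | land Γ φ ψ θ _ ih =>
    intro Γ₀ h
    obtain ⟨u, rfl, rfl⟩ := exists_cons_of_cons_eq_cons h nofun
    obtain ⟨d⟩ := ih (Γ₀ := φ ::ₘ ψ ::ₘ u) (by rw [cons_swap ψ, cons_swap φ])
    refine ⟨(D.land _ φ ψ θ (d.cast ?_)).cast (cons_swap _ _ _)⟩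
    rw [cons_swap β φ, cons_swap β ψ]
  | rand Γ φ ψ _ _ ih₁ ih₂ =>
    rintro Γ₀ rfl
    exact ⟨D.rand _ φ ψ (ih₁ rfl).some (ih₂ rfl).some⟩
  | lor Γ φ ψ θ _ _ ih₁ ih₂ =>
    intro Γ₀ h
    obtain ⟨u, rfl, rfl⟩ := exists_cons_of_cons_eq_cons h nofun
    obtain ⟨d₁⟩ := ih₁ (cons_swap _ _ _)
    obtain ⟨d₂⟩ := ih₂ (cons_swap _ _ _)
    exact ⟨(D.lor _ φ ψ θ (d₁.cast (cons_swap _ _ _)) (d₂.cast (cons_swap _ _ _))).cast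
      (cons_swap _ _ _)⟩
  | ror₁ Γ φ ψ _ ih =>
    rintro Γ₀ rfl
    exact ⟨D.ror₁ _ φ ψ (ih rfl).some⟩
  | ror₂ Γ φ ψ _ ih =>
    rintro Γ₀ rfl
    exact ⟨D.ror₂ _ φ ψ (ih rfl).some⟩
  | limp Γ φ ψ θ _ e ih₁ ih₂ =>
    intro Γ₀ h
    rcases cons_eq_cons.mp h with ⟨hφψ, rfl⟩ | ⟨-, u, rfl, rfl⟩
    · cases hφψ
      exact ⟨e⟩
    · obtain ⟨d₁⟩ := ih₁ (cons_swap _ _ _)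
      obtain ⟨d₂⟩ := ih₂ (cons_swap _ _ _)
      exact ⟨(D.limp _ φ ψ θ (d₁.cast (cons_swap _ _ _)) (d₂.cast (cons_swap _ _ _))).cast
        (cons_swap _ _ _)⟩
  | rimp Γ φ ψ _ ih =>
    rintro Γ₀ rfl
    obtain ⟨d⟩ := ih (cons_swap _ _ _)
    exact ⟨D.rimp _ φ ψ (d.cast (cons_swap _ _ _))⟩
  | m Γ φ ψ d _ =>
    intro Γ₀ h
    obtain ⟨u, -, rfl⟩ := exists_cons_of_cons_eq_cons h nofun
    exact ⟨(D.m _ φ ψ d).cast (cons_swap _ _ _)⟩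

theorem exists_sensible_strict_limp {Γ : Multiset Fm} {θ : Fm} (d₁ : D Γ θ) (hΓ : Irred Γ) :
    ∀ {Γ' : Multiset Fm} {ψ δ : Fm}, Γ = θ.imp ψ ::ₘ Γ' → D (ψ ::ₘ Γ') δ →
      ∃ d : D Γ δ, Sensible d ∧ Strict d := by
  induction d₁ with
  | ax Γ₀ p =>
    intro Γ' ψ δ h _
    exact (hΓ.2.2.2 p ψ ⟨mem_cons_self _ _, h ▸ mem_cons_self _ _⟩).elim
  | lbot => exact (hΓ.2.2.1 (mem_cons_self _ _)).elim
  | land _ φ ψ => exact (hΓ.1 φ ψ (mem_cons_self _ _)).elim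
  | lor _ φ ψ => exact (hΓ.2.1 φ ψ (mem_cons_self _ _)).elim
  | rand _ φ ψ d e =>
    rintro Γ' ψ' δ rfl d₂
    exact ⟨_, sensible_strict_limp (D.rand _ φ ψ d e) d₂ nofun nofun⟩
  | ror₁ _ φ ψ d =>
    rintro Γ' ψ' δ rfl d₂
    exact ⟨_, sensible_strict_limp (D.ror₁ _ φ ψ d) d₂ nofun nofun⟩
  | ror₂ _ φ ψ d =>
    rintro Γ' ψ' δ rfl d₂
    exact ⟨_, sensible_strict_limp (D.ror₂ _ φ ψ d) d₂ nofun nofun⟩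
  | rimp _ φ ψ d =>
    rintro Γ' ψ' δ rfl d₂
    exact ⟨_, sensible_strict_limp (D.rimp _ φ ψ d) d₂ nofun nofun⟩
  | m Γ₀ φ χ d =>
    intro Γ' ψ δ h d₂
    rw [h]
    exact ⟨_, sensible_strict_limp ((D.m Γ₀ φ χ d).cast h) d₂ nofun
      fun _ _ => (endsAxM_cast h _).mpr trivial⟩
  | limp Γ₁ α β θ _ e₂ ih₁ =>
    intro Γ' ψ δ h d₂
    rcases cons_eq_cons.mp h with ⟨hαβ, rfl⟩ | ⟨-, u, rfl, rfl⟩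
    · cases hαβ
      exact ih₁ hΓ rfl d₂
    · obtain ⟨g⟩ := inversion_imp_left d₂ (cons_swap _ _ _)
      exact ih₁ hΓ rfl ((D.limp (β ::ₘ u) θ ψ δ (e₂.cast (cons_swap _ _ _))
        (g.cast (cons_swap _ _ _))).cast (cons_swap _ _ _))

end D

/-- Every irreducible sequent provable in `G3iM^w` has a sensible strict
proof. -/
theorem sensible_strict_proof (Γ : Multiset Fm) (δ : Fm)
    (hIrr : Irred Γ) (h : Nonempty (D Γ δ)) :
    ∃ d : D Γ δ, Sensible d ∧ Strict d := by
  obtain ⟨d⟩ := h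
  rcases d.sensible_strict_or_limp with hd | ⟨Γ', φ, ψ, rfl, ⟨d₁⟩, ⟨d₂⟩⟩
  · exact ⟨d, hd⟩
  · exact d₁.exists_sensible_strict_limp hIrr rfl d₂
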